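/- Suppose B is a barrier, S is an arbitrary set, and g : B² → S is a function such that for some function β assigning to each a ∈ B a finite subset β(a) ⊆ S, one has g(a ∪ b) ∈ β(a) for every a, b ∈ B with a ◁ b. Then there exist a sub-barrier C ⊆ B and a function ι : C → S such that g(a ∪ b) = ι(a) for every a, b ∈ C with a ◁ b. -/

import Mathlib

universe u v

open Set

/-- `r` is an initial segment of `X ⊆ ℕ`: `r ⊆ X` and every element of `X` not in `r`
is greater than every element of `r`. -/
def NatInitSeg (r : Finset ℕ) (X : Set ℕ) : Prop :=
  ↑r ⊆ X ∧ ∀ x ∈ X, x ∉ r → ∀ y ∈ r, y < x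

/-- `B` is a barrier: an infinite inclusion-antichain of finite subsets of `ℕ` such that
every infinite subset of the base has an initial segment in `B`. -/
def IsBarrier (B : Set (Finset ℕ)) : Prop :=
  B.Infinite ∧
  (∀ x ∈ B, ∀ y ∈ B, x ⊆ y → x = y) ∧
  (∀ X : Set ℕ, X ⊆ (⋃ b ∈ B, (↑b : Set ℕ)) → X.Infinite → ∃ r ∈ B, NatInitSeg r X)

/-- `t` is a proper initial segment of the finite set `s`. -/
def FinsetProperInitSeg (t s : Finset ℕ) : Prop :=
  t ⊆ s ∧ t ≠ s ∧ ∀ x ∈ s, x ∉ t → ∀ y ∈ t, y < x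

/-- The shift-extension relation `r ◁ s`: `min r < min s` and `r \ {min r}` is a proper
initial segment of `s`. -/
def ShiftExt (r s : Finset ℕ) : Prop :=
  ∃ m ∈ r, (∀ x ∈ r, m ≤ x) ∧ (∀ y ∈ s, m < y) ∧ FinsetProperInitSeg (r.erase m) s

/-- A map `f` from a barrier `B` into `X` is good for the relation `le`. -/
def GoodOn {X : Type*} (le : X → X → Prop) (B : Set (Finset ℕ)) (f : Finset ℕ → X) : Prop :=
  ∃ s ∈ B, ∃ t ∈ B, ShiftExt s t ∧ le (f s) (f t)

/-- Well quasi-order for a relation: every `ℕ`-sequence is good. -/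
def IsWqoRel {X : Type*} (le : X → X → Prop) : Prop :=
  ∀ p : ℕ → X, ∃ i j : ℕ, i < j ∧ le (p i) (p j)

/-- Better quasi-order: every map from every barrier is good. -/
def IsBqoRel {X : Type*} (le : X → X → Prop) : Prop :=
  ∀ B : Set (Finset ℕ), IsBarrier B → ∀ f : Finset ℕ → X, GoodOn le B f

/-- The (strict) lexicographic order on finite subsets of `ℕ`:
`r < s` iff `r ≠ s` and the least element of the symmetric difference belongs to `r`. -/
def FinsetLexLt (r s : Finset ℕ) : Prop :=
  r ≠ s ∧ ∀ m ∈ symmDiff r s, (∀ x ∈ symmDiff r s, m ≤ x) → m ∈ r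

/-- The barrier `B` has lexicographic order type `≤ α`: there is a lex-strictly-increasing
ordinal-valued function on `B` bounded by `α`. -/
def BarrierTypeLE (B : Set (Finset ℕ)) (α : Ordinal.{0}) : Prop :=
  ∃ g : Finset ℕ → Ordinal.{0}, (∀ b ∈ B, g b < α) ∧
    ∀ b₁ ∈ B, ∀ b₂ ∈ B, FinsetLexLt b₁ b₂ → g b₁ < g b₂

/-- `α`-wqo: every map from a barrier of order type `≤ α` is good. -/
def IsAlphaWqoRel {X : Type*} (le : X → X → Prop) (α : Ordinal.{0}) : Prop :=
  ∀ B : Set (Finset ℕ), IsBarrier B → BarrierTypeLE B α →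
    ∀ f : Finset ℕ → X, GoodOn le B f

/-- `σ`-bqo: a wqo which is a countable union of sets, each bqo in the induced order. -/
def IsSigmaBqoRel {X : Type*} (le : X → X → Prop) : Prop :=
  IsWqoRel le ∧
  ∃ S : ℕ → Set X, (⋃ n, S n) = Set.univ ∧
    ∀ n, IsBqoRel (fun x y : S n => le x.1 y.1)

/-- Sequences of length `α` from `P`. -/
abbrev OrdSeq (P : Type u) (α : Ordinal.{0}) := {β : Ordinal.{0} // β < α} → P

/-- The embeddability quasi-order on `P^α`. -/
def OrdSeqLE {P : Type u} [Preorder P] {α : Ordinal.{0}} (f g : OrdSeq P α) : Prop :=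
  ∃ ρ : {β : Ordinal.{0} // β < α} → {β : Ordinal.{0} // β < α},
    StrictMono ρ ∧ ∀ γ, f γ ≤ g (ρ γ)

/-- Sequences of length `< α` from `P`. -/
abbrev OrdSeqLt (P : Type u) (α : Ordinal.{0}) :=
  Σ β : {β : Ordinal.{0} // β < α}, ({γ : Ordinal.{0} // γ < β.1} → P)

/-- The embeddability quasi-order on `P^{<α}`. -/
def OrdSeqLtLE {P : Type u} [Preorder P] {α : Ordinal.{0}} (f g : OrdSeqLt P α) : Prop :=
  ∃ ρ : {γ : Ordinal.{0} // γ < f.1.1} → {γ : Ordinal.{0} // γ < g.1.1},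
    StrictMono ρ ∧ ∀ δ, f.2 δ ≤ g.2 (ρ δ)

/-- The Dress–Schiffels relation: `f ≤DS g` iff `f i < g i` for every `i` maximal in
`Δ(f,g) = {j | f j ≠ g j}`. -/
def DSle {I : Type u} [PartialOrder I] {P : I → Type v} [∀ i, PartialOrder (P i)]
    (f g : ∀ i, P i) : Prop :=
  ∀ i : I, Maximal (fun j => f j ≠ g j) i → f i < g i

/-- The underlying set of the Dress–Schiffels product: finitely supported functions. -/
abbrev DSProd (I : Type u) [PartialOrder I] (P : I → Type v) [∀ i, PartialOrder (P i)]
    [∀ i, OrderBot (P i)] :=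
  {f : ∀ i, P i // {i | f i ≠ ⊥}.Finite}

/-! For `a ∈ B`, the `b` with `a ◁ b` are the sets `a.erase (min a) ∪ c` with `c` above `a`, so
Nash-Williams' partition theorem (a finite colouring of a thin family is constant on the members
inside some infinite set) makes `g (a ∪ b)` constant once `b \ a` lies in a suitable infinite set.
A fusion sequence `m₀ < m₁ < ⋯` arranges this at stage `k` for the finitely many `a ⊆ [0, mₖ]`
simultaneously, with `b \ a ⊆ {mⱼ | j > k}`; the members of `B` inside `{mₖ}` then form the
required sub-barrier. -/

namespace ShiftExt

variable {a b : Finset ℕ}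

theorem lt_of_mem_sdiff (h : ShiftExt a b) {x y : ℕ} (hx : x ∈ b \ a) (hy : y ∈ a) : y < x := by
  obtain ⟨m, -, -, hmb, -, -, hseg⟩ := h
  obtain ⟨hxb, hxa⟩ := Finset.mem_sdiff.1 hx
  rcases eq_or_ne y m with rfl | hym
  · exact hmb x hxb
  · exact hseg x hxb (fun hx' => hxa (Finset.mem_of_mem_erase hx')) y (Finset.mem_erase.2 ⟨hym, hy⟩)

theorem erase_min'_union_sdiff (h : ShiftExt a b) (ha : a.Nonempty) :
    a.erase (a.min' ha) ∪ (b \ a) = b := by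
  obtain ⟨m, hma, hmin, hmb, hsub, -, -⟩ := h
  obtain rfl : m = a.min' ha := le_antisymm (hmin _ (a.min'_mem ha)) (a.min'_le m hma)
  refine Finset.Subset.antisymm (Finset.union_subset hsub Finset.sdiff_subset) fun x hxb => ?_
  by_cases hxa : x ∈ a
  · exact Finset.mem_union_left _ (Finset.mem_erase.2 ⟨(hmb x hxb).ne', hxa⟩)
  · exact Finset.mem_union_right _ (Finset.mem_sdiff.2 ⟨hxb, hxa⟩)

end ShiftExt

theorem shiftExt_erase_min'_union {a c : Finset ℕ} (ha : a.Nonempty) (hc : c.Nonempty)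
    (hca : ∀ x ∈ c, ∀ y ∈ a, y < x) : ShiftExt a (a.erase (a.min' ha) ∪ c) := by
  refine ⟨a.min' ha, a.min'_mem ha, fun x hx => a.min'_le x hx, fun y hy => ?_,
    Finset.subset_union_left, fun heq => ?_, fun x hx hxe y hy => ?_⟩
  · rcases Finset.mem_union.1 hy with hy | hy
    · exact a.min'_lt_of_mem_erase_min' ha hy
    · exact hca y hy _ (a.min'_mem ha)
  · obtain ⟨x, hx⟩ := hc
    have hxa : x ∈ a := Finset.mem_of_mem_erase (heq ▸ Finset.mem_union_right _ hx)
    exact (hca x hx x hxa).false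
  · rcases Finset.mem_union.1 hx with hx' | hx'
    · exact absurd hx' hxe
    · exact hca x hx' y (Finset.mem_of_mem_erase hy)

namespace IsBarrier

variable {B : Set (Finset ℕ)}

theorem exists_subset (hB : IsBarrier B) {Z : Set ℕ} (hZ : Z ⊆ ⋃ b ∈ B, (↑b : Set ℕ))
    (hZinf : Z.Infinite) : ∃ d ∈ B, ↑d ⊆ Z :=
  let ⟨r, hr, hseg⟩ := hB.2.2 Z hZ hZinf
  ⟨r, hr, hseg.1⟩

theorem empty_notMem (hB : IsBarrier B) : ∅ ∉ B := fun h0 =>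
  hB.1 ((Set.finite_singleton ∅).subset fun b hb =>
    (hB.2.1 ∅ h0 b hb (Finset.empty_subset b)).symm)

theorem nonempty_of_mem (hB : IsBarrier B) {b : Finset ℕ} (hb : b ∈ B) : b.Nonempty :=
  Finset.nonempty_iff_ne_empty.2 fun h => hB.empty_notMem (h ▸ hb)

theorem infinite_base (hB : IsBarrier B) : (⋃ b ∈ B, (↑b : Set ℕ)).Infinite := fun hfin =>
  hB.1 ((hfin.finite_subsets.preimage Finset.coe_injective.injOn).subset
    fun _ hb => Set.subset_biUnion_of_mem (u := ((↑) : Finset ℕ → Set ℕ)) hb)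

theorem restrict (hB : IsBarrier B) {M : Set ℕ} (hMY : M ⊆ ⋃ b ∈ B, (↑b : Set ℕ))
    (hM : M.Infinite) : IsBarrier {b ∈ B | ↑b ⊆ M} := by
  refine ⟨fun hC => ?_, fun x hx y hy => hB.2.1 x hx.1 y hy.1, fun X hX hXinf => ?_⟩
  · -- an element of `B` inside `M` but outside every member of the finite family would be empty
    have hU : (⋃ b ∈ {b ∈ B | ↑b ⊆ M}, (↑b : Set ℕ)).Finite :=
      hC.biUnion fun b _ => b.finite_toSet
    obtain ⟨d, hdB, hdX⟩ := hB.exists_subset (Set.sdiff_subset.trans hMY) (hM.sdiff hU)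
    obtain ⟨x, hx⟩ := hB.nonempty_of_mem hdB
    exact (hdX hx).2 (Set.mem_biUnion ⟨hdB, fun y hy => (hdX hy).1⟩ hx)
  · have hXM : X ⊆ M := fun x hx => by
      obtain ⟨_, hb, hxb⟩ := Set.mem_iUnion₂.1 (hX hx)
      exact hb.2 hxb
    obtain ⟨r, hr, hseg⟩ := hB.2.2 X (hXM.trans hMY) hXinf
    exact ⟨r, ⟨hr, hseg.1.trans hXM⟩, hseg⟩

end IsBarrier

theorem Set.Infinite.inter_Ioi {T : Set ℕ} (hT : T.Infinite) (n : ℕ) : (T ∩ Ioi n).Infinite := by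
  rw [← compl_Iic]
  exact hT.sdiff (finite_Iic n)

/-- `m k` is the least element of the `k`-th term of a decreasing sequence of infinite sets, each
term chosen above the least element of the previous one. -/
theorem exists_strictMono_fusion {N : Set ℕ} (hN : N.Infinite) (P : ℕ → Set ℕ → Prop)
    (hPanti : ∀ n, Antitone (P n))
    (hP : ∀ n ∈ N, ∀ T ⊆ N ∩ Ioi n, T.Infinite → ∃ T' ⊆ T, T'.Infinite ∧ P n T') :
    ∃ m : ℕ → ℕ, StrictMono m ∧ (∀ k, m k ∈ N) ∧ ∀ k, P (m k) (m '' Ioi k) := by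
  have hstep : ∀ T : {T : Set ℕ // T ⊆ N ∧ T.Infinite}, ∃ T' : {T : Set ℕ // T ⊆ N ∧ T.Infinite},
      T'.1 ⊆ T.1 ∩ Ioi (sInf T.1) ∧ P (sInf T.1) T'.1 := by
    rintro ⟨T, hTN, hT⟩
    obtain ⟨T', hT'T, hT', hPT'⟩ := hP _ (hTN (Nat.sInf_mem hT.nonempty)) (T ∩ Ioi (sInf T))
      (inter_subset_inter_left _ hTN) (hT.inter_Ioi _)
    exact ⟨⟨T', hT'T.trans (inter_subset_left.trans hTN), hT'⟩, hT'T, hPT'⟩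
  choose next hnext_sub hnext_P using hstep
  set Ts : ℕ → Set ℕ := fun k => (next^[k] ⟨N, subset_rfl, hN⟩).1 with hTs
  have hTs_succ : ∀ k, Ts (k + 1) = (next (next^[k] ⟨N, subset_rfl, hN⟩)).1 := fun k => by
    simp only [hTs, Function.iterate_succ_apply']
  set m : ℕ → ℕ := fun k => sInf (Ts k)
  have hm_mem : ∀ k, m k ∈ Ts k := fun k => Nat.sInf_mem (next^[k] _).2.2.nonempty
  have hTs_succ_sub : ∀ k, Ts (k + 1) ⊆ Ts k ∩ Ioi (m k) := fun k => hTs_succ k ▸ hnext_sub _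
  have hTs_anti : Antitone Ts :=
    antitone_nat_of_succ_le fun k => (hTs_succ_sub k).trans inter_subset_left
  have hm_mono : StrictMono m := strictMono_nat_of_lt_succ fun k => (hTs_succ_sub k (hm_mem _)).2
  refine ⟨m, hm_mono, fun k => (next^[k] _).2.1 (hm_mem k), fun k => ?_⟩
  have hP_succ : P (m k) (Ts (k + 1)) := hTs_succ k ▸ hnext_P _
  refine hPanti _ ?_ hP_succ
  rintro _ ⟨j, hkj, rfl⟩
  exact hTs_anti (Nat.succ_le_of_lt hkj) (hm_mem j)

def StemStep (D : Set (Finset ℕ)) (Y : Set ℕ) (t s : Finset ℕ) : Prop :=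
  (∀ d ∈ D, ¬d ⊆ s) ∧ ∃ n ∈ Y, n ∉ s ∧ t = insert n s

section Ramsey

variable {D : Set (Finset ℕ)} {Y : Set ℕ}

/-- An infinite chain of stem steps would add infinitely many points of `Y`; a member of `D` among
them is contained in some stem of the chain. -/
theorem wellFounded_stemStep (hD : ∀ Z ⊆ Y, Z.Infinite → ∃ d ∈ D, ↑d ⊆ Z) :
    WellFounded (StemStep D Y) := by
  refine wellFounded_iff_isEmpty_descending_chain.2 ⟨fun ⟨f, hf⟩ => ?_⟩
  choose n hnY hnf hf_succ using fun k => (hf k).2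
  have hf_mono : Monotone f := monotone_nat_of_le_succ fun k => hf_succ k ▸ Finset.subset_insert _ _
  have hn_mem : ∀ {j k}, j < k → n j ∈ f k := fun {j k} hjk =>
    hf_mono (Nat.succ_le_of_lt hjk) (hf_succ j ▸ Finset.mem_insert_self _ _)
  have hn_inj : Function.Injective n := by
    refine fun j k hjk => le_antisymm ?_ ?_ <;> by_contra! hlt
    · exact hnf j (hjk ▸ hn_mem hlt)
    · exact hnf k (hjk ▸ hn_mem hlt)
  obtain ⟨d, hdD, hdn⟩ := hD (range n) (range_subset_iff.2 hnY) (infinite_range_of_injective hn_inj)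
  obtain ⟨K, hK⟩ := (d.finite_toSet.preimage hn_inj.injOn).bddAbove
  refine (hf (K + 1)).1 d hdD fun x hx => ?_
  obtain ⟨j, rfl⟩ := hdn hx
  exact hn_mem (Nat.lt_succ_of_le (hK hx))

/-- Nash-Williams' partition theorem for thin families, relative to a stem `s`. -/
theorem exists_infinite_subset_color_const (hanti : ∀ x ∈ D, ∀ y ∈ D, x ⊆ y → x = y)
    (hD : ∀ Z ⊆ Y, Z.Infinite → ∃ d ∈ D, ↑d ⊆ Z) {S : Type*} (h : Finset ℕ → S) {F : Set S}
    (hF : F.Finite) (hFne : F.Nonempty) (s : Finset ℕ) {N : Set ℕ} (hN : N.Infinite)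
    (hNY : N ⊆ Y) (hsN : Disjoint (↑s : Set ℕ) N)
    (hhF : ∀ c : Finset ℕ, ↑c ⊆ N → s ∪ c ∈ D → h (s ∪ c) ∈ F) :
    ∃ N' ⊆ N, N'.Infinite ∧ ∃ v ∈ F, ∀ c : Finset ℕ, ↑c ⊆ N' → s ∪ c ∈ D → h (s ∪ c) = v := by
  induction s using (wellFounded_stemStep hD).induction generalizing N with
  | _ s ih =>
  by_cases hsD : ∃ d ∈ D, d ⊆ s
  · obtain ⟨d, hdD, hds⟩ := hsD
    have hs_eq : ∀ c, s ∪ c ∈ D → s ∪ c = s := fun c hc =>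
      Finset.Subset.antisymm (hanti d hdD _ hc (hds.trans Finset.subset_union_left) ▸ hds)
        Finset.subset_union_left
    by_cases hs : s ∈ D
    · refine ⟨N, subset_rfl, hN, h s, by simpa using hhF ∅ (by simp) (by simpa using hs), ?_⟩
      exact fun c _ hc => by rw [hs_eq c hc]
    · exact ⟨N, subset_rfl, hN, hFne.some, hFne.some_mem, fun c _ hc => (hs (hs_eq c hc ▸ hc)).elim⟩
  · push Not at hsD
    -- fuse the colourings obtained for the stems `insert n s`, then pigeonhole their colours
    obtain ⟨m, hm_mono, hmN, hmP⟩ := exists_strictMono_fusion hN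
      (fun n T => ∃ v ∈ F, ∀ c : Finset ℕ, ↑c ⊆ T → insert n s ∪ c ∈ D → h (insert n s ∪ c) = v)
      (fun n T T' hT' ⟨v, hvF, hv⟩ => ⟨v, hvF, fun c hc => hv c (hc.trans hT')⟩)
      (fun n hn T hT hTinf => by
        have hns : n ∉ s := fun hns => disjoint_left.1 hsN hns hn
        refine ih (insert n s) ⟨fun d hd => hsD d hd, n, hNY hn, hns, rfl⟩ hTinf
          (fun x hx => hNY (hT hx).1) ?_ fun c hc hcD => ?_
        · rw [Finset.coe_insert, disjoint_insert_left]
          exact ⟨fun hnT => lt_irrefl n (hT hnT).2, hsN.mono_right fun x hx => (hT hx).1⟩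
        · rw [Finset.insert_union, ← Finset.union_insert] at hcD ⊢
          refine hhF _ ?_ hcD
          rw [Finset.coe_insert]
          exact insert_subset hn fun x hx => (hT (hc hx)).1)
    choose v hvF hv using hmP
    obtain ⟨w, hwF, hw⟩ : ∃ w ∈ F, {k | v k = w}.Infinite := by
      by_contra! hfin
      exact infinite_univ ((hF.biUnion hfin).subset fun k _ => mem_biUnion (hvF k) rfl)
    refine ⟨m '' {k | v k = w}, ?_, hw.image hm_mono.injective.injOn, w, hwF, fun c hc hcD => ?_⟩
    · rintro _ ⟨k, -, rfl⟩
      exact hmN k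
    have hcne : c.Nonempty := Finset.nonempty_iff_ne_empty.2 fun hc0 =>
      hsD s (by simpa [hc0] using hcD) subset_rfl
    obtain ⟨k, hkw, hkx⟩ := hc (c.min'_mem hcne)
    have hc_eq : insert (m k) s ∪ c.erase (m k) = s ∪ c := by
      rw [Finset.insert_union, ← Finset.union_insert, hkx, Finset.insert_erase (c.min'_mem hcne)]
    have hc_rest : ↑(c.erase (m k)) ⊆ m '' Ioi k := fun y hy => by
      obtain ⟨hyx, hyc⟩ := Finset.mem_erase.1 hy
      obtain ⟨j, -, rfl⟩ := hc hyc
      refine ⟨j, hm_mono.lt_iff_lt.1 ?_, rfl⟩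
      exact hkx ▸ lt_of_le_of_ne (c.min'_le _ hyc) (hkx ▸ hyx.symm)
    rw [← hc_eq, hv k _ hc_rest (hc_eq ▸ hcD), hkw]

end Ramsey

theorem exists_infinite_subset_forall_mem {ι : Type*} (A : Finset ι) {U : Set ℕ}
    (Q : ι → Set ℕ → Prop) (hQ : ∀ i, Antitone (Q i))
    (h : ∀ i ∈ A, ∀ T ⊆ U, T.Infinite → ∃ T' ⊆ T, T'.Infinite ∧ Q i T') {T : Set ℕ} (hTU : T ⊆ U)
    (hT : T.Infinite) : ∃ T' ⊆ T, T'.Infinite ∧ ∀ i ∈ A, Q i T' := by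
  classical
  induction A using Finset.induction_on generalizing T with
  | empty => exact ⟨T, subset_rfl, hT, by simp⟩
  | insert i A _ ih =>
    obtain ⟨T₁, hT₁T, hT₁, hQi⟩ := h i (Finset.mem_insert_self i A) T hTU hT
    obtain ⟨T₂, hT₂T₁, hT₂, hQA⟩ :=
      ih (fun j hj => h j (Finset.mem_insert_of_mem hj)) (hT₁T.trans hTU) hT₁
    refine ⟨T₂, hT₂T₁.trans hT₁T, hT₂, fun j hj => ?_⟩
    rcases Finset.mem_insert.1 hj with rfl | hj
    · exact hQ j hT₂T₁ hQi
    · exact hQA j hj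

section Choice

variable {S : Type*} {B : Set (Finset ℕ)} {g : Finset ℕ → S} {β : Finset ℕ → Set S}

theorem exists_infinite_subset_shiftExt_const (hB : IsBarrier B)
    (hβfin : ∀ a ∈ B, (β a).Finite) (hg : ∀ a ∈ B, ∀ b ∈ B, ShiftExt a b → g (a ∪ b) ∈ β a)
    {a : Finset ℕ} (ha : a ∈ B) {T : Set ℕ} (hTY : T ⊆ ⋃ b ∈ B, (↑b : Set ℕ)) (hT : T.Infinite)
    (hTa : ∀ x ∈ T, ∀ y ∈ a, y < x) :
    ∃ T' ⊆ T, T'.Infinite ∧ ∃ v, ∀ b ∈ B, ShiftExt a b → ↑(b \ a) ⊆ T' → g (a ∪ b) = v := by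
  have hane := hB.nonempty_of_mem ha
  set s := a.erase (a.min' hane)
  have hsT : Disjoint (↑s : Set ℕ) T := disjoint_left.2 fun x hxs hxT =>
    (hTa x hxT x (Finset.mem_of_mem_erase hxs)).false
  obtain ⟨T', hT'T, hT', v, -, hv⟩ := exists_infinite_subset_color_const hB.2.1
    (fun Z hZ hZinf => hB.exists_subset hZ hZinf) (fun d => g (a ∪ d))
    ((hβfin a ha).insert (g a)) (insert_nonempty _ _) s hT hTY hsT fun c hc hcB => by
      rcases c.eq_empty_or_nonempty with rfl | hcne
      · rw [Finset.union_empty] at hcB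
        have hsa : s = a := hB.2.1 s hcB a ha (Finset.erase_subset _ _)
        exact (Finset.erase_eq_self.1 hsa (a.min'_mem hane)).elim
      · exact mem_insert_of_mem _ (hg a ha _ hcB
          (shiftExt_erase_min'_union hane hcne fun x hx => hTa x (hc hx)))
  refine ⟨T', hT'T, hT', v, fun b hb hab hbT' => ?_⟩
  have hb_eq := hab.erase_min'_union_sdiff hane
  rw [← hb_eq] at hb ⊢
  exact hv (b \ a) hbT' hb

theorem exists_strictMono_shiftExt_const (hB : IsBarrier B)
    (hβfin : ∀ a ∈ B, (β a).Finite) (hg : ∀ a ∈ B, ∀ b ∈ B, ShiftExt a b → g (a ∪ b) ∈ β a) :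
    ∃ m : ℕ → ℕ, StrictMono m ∧ (∀ k, m k ∈ ⋃ b ∈ B, (↑b : Set ℕ)) ∧ ∀ k, ∀ a ∈ B,
      a ⊆ Finset.Iic (m k) → ∃ v, ∀ b ∈ B, ShiftExt a b → ↑(b \ a) ⊆ m '' Ioi k →
        g (a ∪ b) = v := by
  classical
  let Q (a : Finset ℕ) (T : Set ℕ) : Prop :=
    ∃ v, ∀ b ∈ B, ShiftExt a b → ↑(b \ a) ⊆ T → g (a ∪ b) = v
  have hQ (a : Finset ℕ) : Antitone (Q a) := fun T T' hT' ⟨v, hv⟩ =>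
    ⟨v, fun b hb hab hbT => hv b hb hab (hbT.trans hT')⟩
  refine exists_strictMono_fusion hB.infinite_base (fun n T => ∀ a ∈ B, a ⊆ Finset.Iic n → Q a T)
    (fun n T T' hT' hP a ha han => hQ a hT' (hP a ha han)) fun n _ T hT hTinf => ?_
  obtain ⟨T', hT'T, hT', hQT'⟩ := exists_infinite_subset_forall_mem
    ((Finset.Iic n).powerset.filter (· ∈ B)) Q hQ (fun a ha T hTU hTinf => by
      obtain ⟨han, haB⟩ := Finset.mem_filter.1 ha
      refine exists_infinite_subset_shiftExt_const hB hβfin hg haB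
        (fun x hx => (hTU hx).1) hTinf fun x hx y hy => ?_
      exact (Finset.mem_Iic.1 (Finset.mem_powerset.1 han hy)).trans_lt (hTU hx).2)
    hT hTinf
  exact ⟨T', hT'T, hT', fun a ha han =>
    hQT' a (Finset.mem_filter.2 ⟨Finset.mem_powerset.2 han, ha⟩)⟩

end Choice

/-- The choice lemma for barriers: if `g` on `B²` takes values in a finite set `β(a)`
depending only on the first component `a`, then on some sub-barrier `C ⊆ B` the value
`g(a ∪ b)` depends only on `a`. -/
theorem stmt_19 {S : Type u} (B : Set (Finset ℕ)) (hB : IsBarrier B)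
    (g : Finset ℕ → S) (β : Finset ℕ → Set S)
    (hβfin : ∀ a ∈ B, (β a).Finite)
    (hg : ∀ a ∈ B, ∀ b ∈ B, ShiftExt a b → g (a ∪ b) ∈ β a) :
    ∃ C ⊆ B, IsBarrier C ∧ ∃ ι : Finset ℕ → S,
      ∀ a ∈ C, ∀ b ∈ C, ShiftExt a b → g (a ∪ b) = ι a := by
  obtain ⟨m, hm_mono, hmY, hm⟩ := exists_strictMono_shiftExt_const hB hβfin hg
  set C : Set (Finset ℕ) := {b ∈ B | ↑b ⊆ range m}
  have hC : IsBarrier C :=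
    hB.restrict (range_subset_iff.2 hmY) (infinite_range_of_injective hm_mono.injective)
  have hconst : ∀ a ∈ C, ∃ v, ∀ b ∈ C, ShiftExt a b → g (a ∪ b) = v := by
    rintro a ⟨ha, haM⟩
    have hane := hB.nonempty_of_mem ha
    obtain ⟨k, hk⟩ := haM (a.max'_mem hane)
    obtain ⟨v, hv⟩ := hm k a ha fun x hx => Finset.mem_Iic.2 (hk ▸ a.le_max' x hx)
    refine ⟨v, fun b ⟨hb, hbM⟩ hab => hv b hb hab fun x hx => ?_⟩
    obtain ⟨j, rfl⟩ := hbM (Finset.mem_sdiff.1 hx).1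
    exact ⟨j, hm_mono.lt_iff_lt.1 (hk ▸ hab.lt_of_mem_sdiff hx (a.max'_mem hane)), rfl⟩
  have : Nonempty S := ⟨g ∅⟩
  choose! ι hι using hconst
  exact ⟨C, fun b hb => hb.1, hC, ι, hι⟩
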